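/- In the ring ℂ[t]/⟨t³⟩ ⊕ ℂ[t]/⟨t²⟩ ⊕ ℂ[t]/⟨t²⟩ with generators 1_1, 1_ω, 1_{ω⁻¹}, the virtual product (table: 1_ω⋆1_ω = t·1_{ω⁻¹}, 1_ω⋆1_{ω⁻¹} = t²·1_1, 1_{ω⁻¹}⋆1_{ω⁻¹} = t·1_ω) and the cotangent orbifold product (table: 1_ω⋆'1_ω = −t·1_{ω⁻¹}, 1_ω⋆'1_{ω⁻¹} = −t²·1_1, 1_{ω⁻¹}⋆'1_{ω⁻¹} = t·1_ω) are isomorphic as rings, via the ℂ-linear automorphism Θ acting as the identity on the 1_1-summand, by multiplication by e^{2πi/3} on the 1_ω-summand, and by e^{πi/3} on the 1_{ω⁻¹}-summand: Θ(x ⋆ y) = Θ(x) ⋆' Θ(y). -/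

import Mathlib

open Polynomial

/-- `ℂ[t]/⟨t³⟩`, the Chow ring of the untwisted sector of `P(1,3,3)`. -/
noncomputable abbrev CA : Type :=
  Polynomial ℂ ⧸ Ideal.span ({Polynomial.X ^ 3} : Set (Polynomial ℂ))

/-- `ℂ[t]/⟨t²⟩`, the Chow ring of each twisted sector of `P(1,3,3)`. -/
noncomputable abbrev CB : Type :=
  Polynomial ℂ ⧸ Ideal.span ({Polynomial.X ^ 2} : Set (Polynomial ℂ))

noncomputable def cmkA : Polynomial ℂ →+* CA := Ideal.Quotient.mk _
noncomputable def cmkB : Polynomial ℂ →+* CB := Ideal.Quotient.mk _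

/-- `t` in `ℂ[t]/⟨t²⟩`. -/
noncomputable def tB : CB := cmkB Polynomial.X

/-- The module `M = ℂ[t]/⟨t³⟩ ⊕ ℂ[t]/⟨t²⟩ ⊕ ℂ[t]/⟨t²⟩` with sectors
`1₁, 1_ω, 1_{ω⁻¹}`. -/
noncomputable abbrev CM : Type := CA × CB × CB

/-- The virtual product: table `1_ω⋆1_ω = t·1_{ω⁻¹}`, `1_ω⋆1_{ω⁻¹} = t²·1₁`,
`1_{ω⁻¹}⋆1_{ω⁻¹} = t·1_ω`, extended bilinearly using the restriction `π : CA → CB`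
and the pushforward `j : CB → CA` (multiplication by `t²`). -/
noncomputable def cmulV (π : CA →+* CB) (j : CB →ₗ[ℂ] CA) (x y : CM) : CM :=
  (x.1 * y.1 + j (x.2.1 * y.2.2 + x.2.2 * y.2.1),
   π x.1 * y.2.1 + x.2.1 * π y.1 + tB * (x.2.2 * y.2.2),
   π x.1 * y.2.2 + x.2.2 * π y.1 + tB * (x.2.1 * y.2.1))

/-- The cotangent orbifold product: table `1_ω⋆'1_ω = −t·1_{ω⁻¹}`,
`1_ω⋆'1_{ω⁻¹} = −t²·1₁`, `1_{ω⁻¹}⋆'1_{ω⁻¹} = t·1_ω`. -/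
noncomputable def cmulC (π : CA →+* CB) (j : CB →ₗ[ℂ] CA) (x y : CM) : CM :=
  (x.1 * y.1 - j (x.2.1 * y.2.2 + x.2.2 * y.2.1),
   π x.1 * y.2.1 + x.2.1 * π y.1 + tB * (x.2.2 * y.2.2),
   π x.1 * y.2.2 + x.2.2 * π y.1 - tB * (x.2.1 * y.2.1))

/-- The automorphism `Θ`: identity on the `1₁`-summand, multiplication by
`e^{2πi/3}` on the `1_ω`-summand and by `e^{πi/3}` on the `1_{ω⁻¹}`-summand. -/
noncomputable def Theta (x : CM) : CM :=
  (x.1, Complex.exp (2 * Real.pi * Complex.I / 3) • x.2.1,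
    Complex.exp (Real.pi * Complex.I / 3) • x.2.2)

/-!
Rescaling the twisted sectors `1_ω` by `a` and `1_{ω⁻¹}` by `b` commutes with all products
involving `1₁`, and changes the table entries `1_ω ⋆ 1_{ω⁻¹}`, `1_{ω⁻¹} ⋆ 1_{ω⁻¹}`, `1_ω ⋆ 1_ω`
by the factors `ab`, `b²/a`, `a²/b`. So it turns `⋆` into `⋆'` as soon as `ab = -1` and `b² = a`
(hence `a² = -b`), which `a = e^{2πi/3}`, `b = e^{πi/3}` satisfy.
-/

namespace P133

noncomputable def restrictToTwisted : CA →+* CB :=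
  Ideal.Quotient.factor (Ideal.span_singleton_le_span_singleton.mpr (pow_dvd_pow X (by norm_num)))

theorem restrictToTwisted_mk (p : ℂ[X]) : restrictToTwisted (cmkA p) = cmkB p := rfl

noncomputable def pushforwardFromTwisted : CB →ₗ[ℂ] CA :=
  (Submodule.liftQ _ (LinearMap.toSpanSingleton ℂ[X] CA (cmkA (X ^ 2))) <| by
    refine (Ideal.span_singleton_le_iff_mem _).mpr ?_
    change cmkA (X ^ 2 * X ^ 2) = 0
    rw [cmkA, Ideal.Quotient.eq_zero_iff_mem, Ideal.mem_span_singleton, ← pow_add]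
    exact pow_dvd_pow X (by norm_num)).restrictScalars ℂ

theorem pushforwardFromTwisted_mk (p : ℂ[X]) :
    pushforwardFromTwisted (cmkB p) = cmkA (X ^ 2 * p) := by
  change cmkA (p * X ^ 2) = _
  rw [mul_comm]

noncomputable def scaleTwisted (a b : ℂ) (x : CM) : CM :=
  (x.1, a • x.2.1, b • x.2.2)

theorem scaleTwisted_bijective {a b : ℂ} (ha : a ≠ 0) (hb : b ≠ 0) :
    Function.Bijective (scaleTwisted a b) := by
  refine Function.bijective_iff_has_inverse.mpr ⟨scaleTwisted a⁻¹ b⁻¹, ?_, ?_⟩ <;>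
    intro x <;> simp [scaleTwisted, smul_smul, ha, hb]

theorem scaleTwisted_cmulV {a b : ℂ} (hab : a * b = -1) (hbb : b * b = a)
    (π : CA →+* CB) (j : CB →ₗ[ℂ] CA) (x y : CM) :
    scaleTwisted a b (cmulV π j x y) =
      cmulC π j (scaleTwisted a b x) (scaleTwisted a b y) := by
  have hba : b * a = -1 := by rw [mul_comm, hab]
  have haa : a * a = -b := by linear_combination b * hab - a * hbb
  simp only [scaleTwisted, cmulV, cmulC, Prod.mk.injEq]
  refine ⟨?_, ?_, ?_⟩
  · rw [smul_mul_smul_comm, smul_mul_smul_comm, hab, hba, neg_one_smul, neg_one_smul, ← neg_add,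
      map_neg, sub_neg_eq_add]
  · simp only [smul_add, mul_smul_comm, smul_mul_assoc, smul_smul, hbb]
  · simp only [smul_add, mul_smul_comm, smul_mul_assoc, smul_smul, haa]
    rw [neg_smul, sub_neg_eq_add]

theorem exp_two_pi_I_div_three_mul_exp_pi_I_div_three :
    Complex.exp (2 * Real.pi * Complex.I / 3) * Complex.exp (Real.pi * Complex.I / 3) = -1 := by
  rw [← Complex.exp_add, ← Complex.exp_pi_mul_I]
  ring_nf

theorem exp_pi_I_div_three_mul_self :
    Complex.exp (Real.pi * Complex.I / 3) * Complex.exp (Real.pi * Complex.I / 3) =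
      Complex.exp (2 * Real.pi * Complex.I / 3) := by
  rw [← Complex.exp_add]
  ring_nf

theorem theta_eq_scaleTwisted :
    Theta =
      scaleTwisted (Complex.exp (2 * Real.pi * Complex.I / 3)) (Complex.exp (Real.pi * Complex.I / 3)) :=
  rfl

end P133

open P133 in
/-- The virtual product and the cotangent orbifold product on the Chow groups of
`I P(1,3,3)` are isomorphic as rings via `Θ`: `Θ` is bijective and
`Θ(x ⋆ y) = Θ(x) ⋆' Θ(y)`. -/
theorem virtual_iso_cotangent_P133 :
    ∃ (π : CA →+* CB) (j : CB →ₗ[ℂ] CA),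
      (∀ p : Polynomial ℂ, π (cmkA p) = cmkB p) ∧
      (∀ p : Polynomial ℂ, j (cmkB p) = cmkA (Polynomial.X ^ 2 * p)) ∧
      Function.Bijective Theta ∧
      (∀ x y : CM, Theta (cmulV π j x y) = cmulC π j (Theta x) (Theta y)) := by
  refine ⟨restrictToTwisted, pushforwardFromTwisted, restrictToTwisted_mk,
    pushforwardFromTwisted_mk, ?_, ?_⟩
  · rw [theta_eq_scaleTwisted]
    exact scaleTwisted_bijective (Complex.exp_ne_zero _) (Complex.exp_ne_zero _)
  · rw [theta_eq_scaleTwisted]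
    exact scaleTwisted_cmulV exp_two_pi_I_div_three_mul_exp_pi_I_div_three
      exp_pi_I_div_three_mul_self restrictToTwisted pushforwardFromTwisted
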